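/- Identity for the Barnes-related function: $\psi^{(-2)}(z)=\int_0^z\log\Gamma(x)\,dx$ satisfies $\psi^{(-2)}(z)=\tfrac{z(1-z)}{2}+\tfrac{z}{2}\log 2\pi + z\log\Gamma(z)-\log G(1+z)$ for $0<z$, where $G$ is the Barnes G-function. -/

import Mathlib

/-! Euler's limit formula for `Γ` together with `H_n - log n → γ` gives the Weierstrass series
`log Γ x + log x + γ x = ∑ₖ aₖ(x)`, `aₖ(x) = x/(k+1) - log (1 + x/(k+1))`, with
`0 ≤ aₖ(x) ≤ x² / (2(k+1)²)`, so it can be integrated termwise over `[0, z]`. The logarithm `lₖ` of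
the `k`-th factor of the product defining `G(1+z)` satisfies `lₖ' = x aₖ'`, hence
`∫₀ᶻ aₖ = z aₖ(z) - lₖ(z)`. Summing over `k` expresses `∑ₖ lₖ(z)`, and thus `log G(1+z)`, through
`z log Γ z` and `∫₀ᶻ log Γ`. -/

open Real

/-- The antiderivative of `log ∘ Γ`: `ψ⁽⁻²⁾(z) = ∫₀ᶻ log Γ(x) dx`. -/
noncomputable def psiM2 (z : ℝ) : ℝ := ∫ t in (0:ℝ)..z, Real.log (Real.Gamma t)

/-- The Barnes G-function (real values), defined by its Weierstrass product:
`G(1+z) = (2π)^(z/2) exp(-(z+z²(1+γ))/2) ∏_{k≥1} (1+z/k)^k exp(z²/(2k) - z)`,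
where `γ` is the Euler–Mascheroni constant.  It satisfies `G(1) = 1` and
`G(z+1) = Γ(z) G(z)`. -/
noncomputable def barnesG (w : ℝ) : ℝ :=
  (2 * π) ^ ((w - 1) / 2) *
    Real.exp (-((w - 1) + (w - 1) ^ 2 * (1 + Real.eulerMascheroniConstant)) / 2) *
    ∏' k : ℕ, (1 + (w - 1) / ((k : ℝ) + 1)) ^ (k + 1) *
      Real.exp ((w - 1) ^ 2 / (2 * ((k : ℝ) + 1)) - (w - 1))

open Filter Topology Set MeasureTheory intervalIntegral

lemma sub_log_one_add_nonneg {t : ℝ} (ht : -1 < t) : 0 ≤ t - log (1 + t) := by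
  have := log_le_sub_one_of_pos (show 0 < 1 + t by linarith)
  linarith

lemma sub_log_one_add_le_sq_div_two {t : ℝ} (ht : 0 ≤ t) : t - log (1 + t) ≤ t ^ 2 / 2 := by
  have hlog := le_log_one_add_of_nonneg ht
  have heq : t - 2 * t / (t + 2) = t ^ 2 / (t + 2) := by field_simp; ring
  have hle : t ^ 2 / (t + 2) ≤ t ^ 2 / 2 :=
    div_le_div_of_nonneg_left (sq_nonneg t) two_pos (by linarith)
  linarith

lemma one_add_div_natCast_add_one_pos {y : ℝ} (hy : -1 < y) (k : ℕ) : 0 < 1 + y / (k + 1) := by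
  have hk : (1 : ℝ) ≤ k + 1 := by simp
  rw [one_add_div (by positivity)]
  exact div_pos (by linarith) (by positivity)

lemma summable_one_div_natCast_add_one_sq : Summable fun k : ℕ => 1 / ((k : ℝ) + 1) ^ 2 := by
  have := (summable_nat_add_iff 1).mpr (Real.summable_one_div_nat_pow.mpr one_lt_two)
  exact_mod_cast this

noncomputable def logGammaTerm (x : ℝ) (k : ℕ) : ℝ := x / (k + 1) - log (1 + x / (k + 1))

noncomputable def logBarnesTerm (z : ℝ) (k : ℕ) : ℝ :=
  (k + 1) * log (1 + z / (k + 1)) + z ^ 2 / (2 * (k + 1)) - z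

lemma logGammaTerm_nonneg {x : ℝ} (hx : -1 < x) (k : ℕ) : 0 ≤ logGammaTerm x k :=
  sub_log_one_add_nonneg (by linarith [one_add_div_natCast_add_one_pos hx k])

lemma logGammaTerm_le {x : ℝ} (hx : 0 ≤ x) (k : ℕ) :
    logGammaTerm x k ≤ x ^ 2 / 2 / (k + 1) ^ 2 :=
  (sub_log_one_add_le_sq_div_two (by positivity)).trans_eq (by rw [div_pow]; ring)

lemma sum_range_logGammaTerm {x : ℝ} (hx : 0 < x) (n : ℕ) :
    ∑ k ∈ Finset.range n, logGammaTerm x k =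
      BohrMollerup.logGammaSeq x n + log x + x * (harmonic n - log n) := by
  induction n with
  | zero => simp [BohrMollerup.logGammaSeq]
  | succ n ih =>
    have hn : (0 : ℝ) < n + 1 := by positivity
    have hfactor : 1 + x / (n + 1) = (x + (n + 1)) / (n + 1) := by field_simp; ring
    rw [Finset.sum_range_succ, ih, logGammaTerm, BohrMollerup.logGammaSeq,
      BohrMollerup.logGammaSeq, Finset.sum_range_succ _ (n + 1), Nat.factorial_succ, harmonic_succ]
    push_cast
    rw [log_mul hn.ne' (by positivity), hfactor, log_div (by positivity) hn.ne']
    ring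

theorem hasSum_logGammaTerm {x : ℝ} (hx : 0 < x) :
    HasSum (logGammaTerm x) (log (Gamma x) + log x + eulerMascheroniConstant * x) := by
  rw [hasSum_iff_tendsto_nat_of_nonneg (logGammaTerm_nonneg (by linarith))]
  simp_rw [sum_range_logGammaTerm hx]
  have := ((BohrMollerup.tendsto_log_gamma hx).add_const (log x)).add
    (tendsto_harmonic_sub_log.const_mul x)
  simpa [mul_comm] using this

lemma hasDerivAt_mul_logGammaTerm_sub_logBarnesTerm {x : ℝ} (hx : -1 < x) (k : ℕ) :
    HasDerivAt (fun y => y * logGammaTerm y k - logBarnesTerm y k) (logGammaTerm x k) x := by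
  have hk : (0 : ℝ) < k + 1 := by positivity
  have hpos := one_add_div_natCast_add_one_pos hx k
  have hx' : (k : ℝ) + 1 + x ≠ 0 := by
    rw [one_add_div hk.ne'] at hpos
    exact (div_pos_iff_of_pos_right hk).1 hpos |>.ne'
  have hlin : HasDerivAt (fun y : ℝ => y / (k + 1)) (1 / (k + 1)) x :=
    (hasDerivAt_id' x).div_const _
  have hlog : HasDerivAt (fun y => log (1 + y / (k + 1))) (1 / (k + 1 + x)) x :=
    ((hlin.const_add 1).log hpos.ne').congr_deriv (by field_simp)
  have hbarnes : HasDerivAt (fun y => logBarnesTerm y k)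
      ((k + 1) * (1 / (k + 1 + x)) + 2 * x / (2 * (k + 1)) - 1) x := by
    have := ((hlog.const_mul ((k : ℝ) + 1)).add
      ((hasDerivAt_pow 2 x).div_const (2 * ((k : ℝ) + 1)))).sub (hasDerivAt_id' x)
    exact this.congr_deriv (by push_cast; ring)
  have hgamma : HasDerivAt (fun y => logGammaTerm y k) (1 / (k + 1) - 1 / (k + 1 + x)) x :=
    hlin.sub hlog
  refine (((hasDerivAt_id' x).mul hgamma).sub hbarnes).congr_deriv ?_
  field_simp
  ring

lemma continuousAt_logGammaTerm {x : ℝ} (hx : -1 < x) (k : ℕ) :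
    ContinuousAt (fun y => logGammaTerm y k) x := by
  have := (one_add_div_natCast_add_one_pos hx k).ne'
  unfold logGammaTerm
  fun_prop (disch := assumption)

theorem integral_logGammaTerm {z : ℝ} (hz : -1 < z) (k : ℕ) :
    ∫ x in 0..z, logGammaTerm x k = z * logGammaTerm z k - logBarnesTerm z k := by
  have hmem : ∀ x ∈ uIcc 0 z, -1 < x := fun x hx =>
    lt_of_lt_of_le (lt_min (by norm_num) hz) hx.1
  rw [integral_eq_sub_of_hasDerivAt
    (fun x hx => hasDerivAt_mul_logGammaTerm_sub_logBarnesTerm (hmem x hx) k)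
    (ContinuousOn.intervalIntegrable fun x hx =>
      (continuousAt_logGammaTerm (hmem x hx) k).continuousWithinAt)]
  simp [logGammaTerm, logBarnesTerm]

theorem intervalIntegrable_log_Gamma {a b : ℝ} (ha : 0 ≤ a) (hb : 0 ≤ b) :
    IntervalIntegrable (fun x => log (Gamma x)) volume a b := by
  have hshift : ContinuousOn (fun x => log (Gamma (x + 1))) (uIcc a b) := by
    intro x hx
    have hx0 : 0 ≤ x := le_trans (le_min ha hb) hx.1
    have hGamma : Gamma (x + 1) ≠ 0 := (Gamma_pos_of_pos (by linarith)).ne'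
    refine ContinuousAt.continuousWithinAt (ContinuousAt.log ?_ hGamma)
    refine (differentiableAt_Gamma fun m => ?_).continuousAt.comp
      (continuous_add_const 1).continuousAt
    have : (0 : ℝ) ≤ m := m.cast_nonneg
    linarith
  refine (hshift.intervalIntegrable.sub intervalIntegrable_log').congr_ae ?_
  filter_upwards [ae_restrict_mem measurableSet_uIoc] with x hx
  have hx0 : 0 < x := lt_of_le_of_lt (le_min ha hb) hx.1
  rw [Gamma_add_one hx0.ne', log_mul hx0.ne' (Gamma_pos_of_pos hx0).ne']
  ring

theorem hasSum_integral_logGammaTerm {z : ℝ} (hz : 0 ≤ z) :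
    HasSum (fun k => ∫ x in 0..z, logGammaTerm x k)
      (∫ x in 0..z, (log (Gamma x) + log x + eulerMascheroniConstant * x)) := by
  have hpos : ∀ x ∈ uIoc 0 z, 0 < x := fun x hx => by rw [uIoc_of_le hz] at hx; exact hx.1
  refine hasSum_integral_of_dominated_convergence (fun k _ => z ^ 2 / 2 / ((k : ℝ) + 1) ^ 2)
    (fun k => ?_) (fun k => ae_of_all _ fun x hx => ?_) (ae_of_all _ fun _ _ => ?_)
    intervalIntegrable_const (ae_of_all _ fun x hx => hasSum_logGammaTerm (hpos x hx))
  · have hmeas : Measurable fun x => logGammaTerm x k := by unfold logGammaTerm; fun_prop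
    exact hmeas.aestronglyMeasurable
  · have hx0 := hpos x hx
    have hxz : x ≤ z := by rw [uIoc_of_le hz] at hx; exact hx.2
    rw [Real.norm_of_nonneg (logGammaTerm_nonneg (by linarith) k)]
    refine (logGammaTerm_le hx0.le k).trans ?_
    gcongr
  · simpa [div_eq_mul_one_div (z ^ 2 / 2)] using
      summable_one_div_natCast_add_one_sq.mul_left (z ^ 2 / 2)

theorem log_barnesG_one_add {z s : ℝ} (hz : -1 < z) (hs : HasSum (logBarnesTerm z) s) :
    log (barnesG (1 + z)) =
      z / 2 * log (2 * π) - (z + z ^ 2 * (1 + eulerMascheroniConstant)) / 2 + s := by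
  have hfactor (k : ℕ) : (1 + z / ((k : ℝ) + 1)) ^ (k + 1) *
      exp (z ^ 2 / (2 * ((k : ℝ) + 1)) - z) = exp (logBarnesTerm z k) := by
    rw [logBarnesTerm, add_sub_assoc, exp_add, ← exp_log (one_add_div_natCast_add_one_pos hz k),
      ← exp_nat_mul, log_exp]
    push_cast
    ring_nf
  have hprod : HasProd (fun k => exp (logBarnesTerm z k)) (exp s) := hs.rexp
  rw [barnesG, add_sub_cancel_left, tprod_congr hfactor, hprod.tprod_eq,
    log_mul (by positivity) (exp_ne_zero _), log_mul (by positivity) (exp_ne_zero _),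
    log_rpow two_pi_pos, log_exp, log_exp]
  ring

/-- Closed form for `ψ⁽⁻²⁾`:
`ψ⁽⁻²⁾(z) = z(1-z)/2 + (z/2) log 2π + z log Γ(z) - log G(1+z)` for `z > 0`. -/
theorem stmt2 (z : ℝ) (hz : 0 < z) :
    psiM2 z = z * (1 - z) / 2 + z / 2 * Real.log (2 * π) +
      z * Real.log (Real.Gamma z) - Real.log (barnesG (1 + z)) := by
  set γ := eulerMascheroniConstant
  have hintegral : ∫ x in 0..z, (log (Gamma x) + log x + γ * x) =
      psiM2 z + (z * log z - z) + γ * (z ^ 2 / 2) := by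
    have hlogGamma := intervalIntegrable_log_Gamma le_rfl hz.le
    rw [integral_add (hlogGamma.add intervalIntegrable_log')
      ((continuous_const_mul γ).intervalIntegrable 0 z),
      integral_add hlogGamma intervalIntegrable_log', integral_log,
      intervalIntegral.integral_const_mul, integral_id, psiM2]
    simp
  have hbarnes : HasSum (logBarnesTerm z)
      (z * (log (Gamma z) + log z + γ * z) - (psiM2 z + (z * log z - z) + γ * (z ^ 2 / 2))) := by
    have hterm :
        logBarnesTerm z = fun k => z * logGammaTerm z k - ∫ x in 0..z, logGammaTerm x k := by
      funext k
      rw [integral_logGammaTerm (by linarith) k]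
      ring
    rw [hterm, ← hintegral]
    exact ((hasSum_logGammaTerm hz).mul_left z).sub (hasSum_integral_logGammaTerm hz.le)
  rw [log_barnesG_one_add (by linarith) hbarnes]
  ring
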